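/- For fixed γ > 0 and 0 < φ < 1, each entry of w^opt is strictly decreasing in φ, and as φ → 1⁻ each entry of w^opt tends to 0. -/

import Mathlib

/-!
With `A = Λ + γ I` one has `(γ Λ⁻¹ + I)⁻¹ = A⁻¹ Λ`, hence `w = 1 - γ z` where `A z = 1`.
For `0 < φ < 1`, `Λ` and `A` have nonpositive off-diagonal entries and positive row sums (those of
`Λ` are `1 - φ` at the two ends and `(1 - φ)²` inside), so they obey a minimum principle:
`A x ≥ 0` (resp. `> 0`) entrywise forces `x ≥ 0` (resp. `> 0`). Comparing `z` with constant
vectors gives `1 ≤ (1 + γ - φ) z` and `γ z ≤ 1`, whence `0 ≤ w ≤ (1 - φ) / γ → 0`. For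
`φ₁ < φ₂`, `A(φ₂) (z(φ₂) - z(φ₁)) = (Λ(φ₁) - Λ(φ₂)) z(φ₁)`, and an explicit identity for
`Λ(φ₁) - Λ(φ₂)` together with `(1 + γ - φ₁ φ₂) z(φ₁) > 1` shows that this is positive, so `z`
increases strictly and `w` decreases strictly.
-/

open Matrix Filter

/-- The AR(1) precision tridiagonal matrix. -/
noncomputable def ar1Lambda (n : ℕ) (φ : ℝ) : Matrix (Fin n) (Fin n) ℝ :=
  Matrix.of fun i j =>
    if i = j then (if i.val = 0 ∨ i.val = n - 1 then (1 : ℝ) else 1 + φ ^ 2)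
    else if i.val + 1 = j.val ∨ j.val + 1 = i.val then -φ else 0

theorem Fin.sum_ite_val_eq {M : Type*} [AddCommMonoid M] (n k : ℕ) (c : M) :
    (∑ j : Fin n, if (j : ℕ) = k then c else 0) = if k < n then c else 0 := by
  rw [Fin.sum_univ_eq_sum_range (fun j => if j = k then c else 0), Finset.sum_ite_eq']
  simp

namespace Matrix

def IsRowDominantZMatrix {ι : Type*} [Fintype ι] (A : Matrix ι ι ℝ) : Prop :=
  (∀ i j, i ≠ j → A i j ≤ 0) ∧ ∀ i, 0 < ∑ j, A i j

variable {ι : Type*} [Fintype ι]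

theorem mulVec_apply_le_sum_mul_of_forall_le {A : Matrix ι ι ℝ} (hA : ∀ i j, i ≠ j → A i j ≤ 0)
    {x : ι → ℝ} {i : ι} (hi : ∀ j, x i ≤ x j) : (A *ᵥ x) i ≤ (∑ j, A i j) * x i := by
  rw [mulVec, dotProduct, Finset.sum_mul]
  refine Finset.sum_le_sum fun j _ => ?_
  rcases eq_or_ne i j with rfl | hij
  · rfl
  · exact mul_le_mul_of_nonpos_left (hi j) (hA i j hij)

theorem mulVec_one_apply {R : Type*} [NonAssocSemiring R] (A : Matrix ι ι R) (i : ι) :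
    (A *ᵥ 1) i = ∑ j, A i j := by
  simp [mulVec, dotProduct]

theorem sum_add_smul_one_apply {R : Type*} [NonAssocSemiring R] [DecidableEq ι]
    (A : Matrix ι ι R) (c : R) (i : ι) :
    ∑ j, (A + c • 1) i j = ∑ j, A i j + c := by
  simp [Finset.sum_add_distrib, one_apply]

namespace IsRowDominantZMatrix

variable {A : Matrix ι ι ℝ}

theorem pos_of_mulVec_pos (hA : A.IsRowDominantZMatrix) {x : ι → ℝ}
    (hx : ∀ i, 0 < (A *ᵥ x) i) (i : ι) : 0 < x i := by
  obtain ⟨k, -, hk⟩ := Finset.univ.exists_min_image x ⟨i, Finset.mem_univ i⟩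
  have hkx := mulVec_apply_le_sum_mul_of_forall_le hA.1 (fun j => hk j (Finset.mem_univ j))
  have : 0 < x k := pos_of_mul_pos_right ((hx k).trans_le hkx) (hA.2 k).le
  exact this.trans_le (hk i (Finset.mem_univ i))

theorem nonneg_of_mulVec_nonneg (hA : A.IsRowDominantZMatrix) {x : ι → ℝ}
    (hx : ∀ i, 0 ≤ (A *ᵥ x) i) (i : ι) : 0 ≤ x i := by
  obtain ⟨k, -, hk⟩ := Finset.univ.exists_min_image x ⟨i, Finset.mem_univ i⟩
  have hkx := mulVec_apply_le_sum_mul_of_forall_le hA.1 (fun j => hk j (Finset.mem_univ j))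
  have : 0 ≤ x k := nonneg_of_mul_nonneg_right ((hx k).trans hkx) (hA.2 k)
  exact this.trans (hk i (Finset.mem_univ i))

theorem isUnit_det [DecidableEq ι] (hA : A.IsRowDominantZMatrix) : IsUnit A.det := by
  rw [isUnit_iff_ne_zero]
  intro hdet
  obtain ⟨v, hv, hAv⟩ := exists_mulVec_eq_zero_iff.2 hdet
  refine hv (funext fun i => le_antisymm ?_ (hA.nonneg_of_mulVec_nonneg (by simp [hAv]) i))
  simpa using hA.nonneg_of_mulVec_nonneg (x := -v) (by simp [mulVec_neg, hAv]) i

theorem add_smul_one [DecidableEq ι] (hA : A.IsRowDominantZMatrix) {c : ℝ} (hc : 0 ≤ c) :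
    (A + c • 1).IsRowDominantZMatrix := by
  refine ⟨fun i j hij => by simpa [one_apply_ne hij] using hA.1 i j hij, fun i => ?_⟩
  rw [sum_add_smul_one_apply]
  linarith [hA.2 i]

theorem one_le_mul_of_sum_le (hA : A.IsRowDominantZMatrix) {z : ι → ℝ} (hz : A *ᵥ z = 1)
    {c : ℝ} (hc : ∀ i, ∑ j, A i j ≤ c) (i : ι) : 1 ≤ c * z i := by
  have := hA.nonneg_of_mulVec_nonneg (x := c • z - 1) (fun k => by
    simp [mulVec_sub, mulVec_smul, hz, mulVec_one_apply, hc k])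
  simpa [sub_nonneg] using this i

theorem mul_le_one_of_le_sum (hA : A.IsRowDominantZMatrix) {z : ι → ℝ} (hz : A *ᵥ z = 1)
    {c : ℝ} (hc : ∀ i, c ≤ ∑ j, A i j) (i : ι) : c * z i ≤ 1 := by
  have := hA.nonneg_of_mulVec_nonneg (x := 1 - c • z) (fun k => by
    simp [mulVec_sub, mulVec_smul, hz, mulVec_one_apply, hc k])
  simpa [sub_nonneg] using this i

theorem lt_of_mulVec_eq_one {B : Matrix ι ι ℝ} (hB : B.IsRowDominantZMatrix) {x y : ι → ℝ}
    (hx : A *ᵥ x = 1) (hy : B *ᵥ y = 1) (hAB : ∀ i, 0 < ((A - B) *ᵥ x) i) (i : ι) :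
    x i < y i := by
  have := hB.pos_of_mulVec_pos (x := y - x) (by rwa [mulVec_sub, hy, ← hx, ← sub_mulVec])
  simpa using this i

end IsRowDominantZMatrix

theorem smul_inv_add_one_inv_mulVec {K ι : Type*} [Field K] [Fintype ι] [DecidableEq ι]
    {L : Matrix ι ι K} (hL : IsUnit L.det) (c : K) (hLc : IsUnit (L + c • 1).det) (v : ι → K) :
    (c • L⁻¹ + 1)⁻¹ *ᵥ v = v - c • ((L + c • 1)⁻¹ *ᵥ v) := by
  have : c • L⁻¹ + 1 = L⁻¹ * (L + c • 1) := by
    rw [Matrix.mul_add, Matrix.mul_smul, Matrix.mul_one, nonsing_inv_mul _ hL, add_comm]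
  have hL' : L = (L + c • 1) - c • 1 := (add_sub_cancel_right L _).symm
  rw [this, mul_inv_rev, nonsing_inv_nonsing_inv _ hL, ← mulVec_mulVec]
  nth_rw 2 [hL']
  rw [sub_mulVec, mulVec_sub, mulVec_mulVec, nonsing_inv_mul _ hLc, one_mulVec, smul_mulVec,
    one_mulVec, mulVec_smul]

end Matrix

section AR1

variable {n : ℕ}

theorem ar1Lambda_apply (φ : ℝ) (i j : Fin n) :
    ar1Lambda n φ i j =
      (if (j : ℕ) = i then (if (i : ℕ) = 0 ∨ (i : ℕ) = n - 1 then 1 else 1 + φ ^ 2) else 0)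
      + (if (j : ℕ) = i + 1 then -φ else 0)
      + (if (j : ℕ) = i - 1 then (if (i : ℕ) = 0 then 0 else -φ) else 0) := by
  simp only [ar1Lambda, Matrix.of_apply, Fin.ext_iff]
  split_ifs <;> first | ring1 | (exfalso; omega)

theorem sum_ar1Lambda_apply (hn : 2 ≤ n) (φ : ℝ) (i : Fin n) :
    ∑ j, ar1Lambda n φ i j = if (i : ℕ) = 0 ∨ (i : ℕ) = n - 1 then 1 - φ else (1 - φ) ^ 2 := by
  simp only [ar1Lambda_apply, Finset.sum_add_distrib, Fin.sum_ite_val_eq]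
  have := i.isLt
  split_ifs <;> first | ring1 | (exfalso; omega)

theorem ar1Lambda_apply_nonpos_of_ne {φ : ℝ} (hφ : 0 ≤ φ) {i j : Fin n} (hij : i ≠ j) :
    ar1Lambda n φ i j ≤ 0 := by
  simp only [ar1Lambda, of_apply, if_neg hij]
  split_ifs <;> linarith

theorem isRowDominantZMatrix_ar1Lambda (hn : 2 ≤ n) {φ : ℝ} (hφ : φ ∈ Set.Ioo 0 1) :
    (ar1Lambda n φ).IsRowDominantZMatrix := by
  refine ⟨fun _ _ => ar1Lambda_apply_nonpos_of_ne hφ.1.le, fun i => ?_⟩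
  rw [sum_ar1Lambda_apply hn]
  split_ifs <;> nlinarith [hφ.1, hφ.2]

theorem smul_ar1Lambda_sub_ar1Lambda (φ₁ φ₂ : ℝ) :
    φ₁ • (ar1Lambda n φ₁ - ar1Lambda n φ₂) =
      (φ₁ - φ₂) • (ar1Lambda n φ₁ - (1 - φ₁ * φ₂) • 1) +
        diagonal fun i : Fin n =>
          if (i : ℕ) = 0 ∨ (i : ℕ) = n - 1 then φ₁ * φ₂ * (φ₂ - φ₁) else 0 := by
  ext i j
  simp only [ar1Lambda, Matrix.smul_apply, Matrix.sub_apply, Matrix.add_apply, of_apply, one_apply,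
    diagonal_apply, smul_eq_mul]
  split_ifs <;> ring

variable {γ : ℝ}

theorem one_le_mul_of_ar1_mulVec_eq_one (hn : 2 ≤ n) (hγ : 0 ≤ γ) {φ : ℝ}
    (hφ : φ ∈ Set.Ioo 0 1) {z : Fin n → ℝ} (hz : (ar1Lambda n φ + γ • 1) *ᵥ z = 1) (i : Fin n) :
    1 ≤ (1 + γ - φ) * z i := by
  refine ((isRowDominantZMatrix_ar1Lambda hn hφ).add_smul_one hγ).one_le_mul_of_sum_le hz
    (fun k => ?_) i
  rw [sum_add_smul_one_apply, sum_ar1Lambda_apply hn]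
  split_ifs <;> nlinarith [hφ.1, hφ.2]

theorem mul_le_one_of_ar1_mulVec_eq_one (hn : 2 ≤ n) (hγ : 0 ≤ γ) {φ : ℝ}
    (hφ : φ ∈ Set.Ioo 0 1) {z : Fin n → ℝ} (hz : (ar1Lambda n φ + γ • 1) *ᵥ z = 1) (i : Fin n) :
    γ * z i ≤ 1 := by
  refine ((isRowDominantZMatrix_ar1Lambda hn hφ).add_smul_one hγ).mul_le_one_of_le_sum hz
    (fun k => ?_) i
  rw [sum_add_smul_one_apply, sum_ar1Lambda_apply hn]
  split_ifs <;> nlinarith [hφ.1, hφ.2]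

theorem lt_of_ar1_mulVec_eq_one (hn : 2 ≤ n) (hγ : 0 ≤ γ) {φ₁ φ₂ : ℝ}
    (h₁ : φ₁ ∈ Set.Ioo 0 1) (h₂ : φ₂ ∈ Set.Ioo 0 1) (h : φ₁ < φ₂) {z₁ z₂ : Fin n → ℝ}
    (hz₁ : (ar1Lambda n φ₁ + γ • 1) *ᵥ z₁ = 1) (hz₂ : (ar1Lambda n φ₂ + γ • 1) *ᵥ z₂ = 1)
    (i : Fin n) : z₁ i < z₂ i := by
  refine ((isRowDominantZMatrix_ar1Lambda hn h₂).add_smul_one hγ).lt_of_mulVec_eq_one hz₁ hz₂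
    (fun k => ?_) i
  have hΛz : ar1Lambda n φ₁ *ᵥ z₁ = 1 - γ • z₁ := by
    rw [← hz₁, add_mulVec, smul_mulVec, one_mulVec, add_sub_cancel_right]
  have key : φ₁ * ((ar1Lambda n φ₁ + γ • 1 - (ar1Lambda n φ₂ + γ • 1)) *ᵥ z₁) k =
      (φ₂ - φ₁) * ((1 + γ - φ₁ * φ₂) * z₁ k - 1) +
        (if (k : ℕ) = 0 ∨ (k : ℕ) = n - 1 then φ₁ * φ₂ * (φ₂ - φ₁) else 0) * z₁ k := by
    rw [add_sub_add_right_eq_sub, ← smul_eq_mul, ← Pi.smul_apply, ← smul_mulVec,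
      smul_ar1Lambda_sub_ar1Lambda, add_mulVec, smul_mulVec, sub_mulVec, hΛz, smul_mulVec,
      one_mulVec]
    simp only [Pi.add_apply, Pi.smul_apply, Pi.sub_apply, mulVec_diagonal, smul_eq_mul,
      Pi.one_apply]
    ring
  have hz := one_le_mul_of_ar1_mulVec_eq_one hn hγ h₁ hz₁ k
  have hzpos : 0 < z₁ k := pos_of_mul_pos_right (one_pos.trans_le hz) (by linarith [h₁.2])
  have hcorr : 0 ≤ (if (k : ℕ) = 0 ∨ (k : ℕ) = n - 1 then φ₁ * φ₂ * (φ₂ - φ₁) else 0) * z₁ k := by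
    refine mul_nonneg ?_ hzpos.le
    split_ifs
    · exact mul_nonneg (mul_nonneg h₁.1.le h₂.1.le) (by linarith)
    · exact le_rfl
  refine pos_of_mul_pos_right (key ▸ ?_) h₁.1.le
  nlinarith [mul_pos (mul_pos h₁.1 (sub_pos.2 h₂.2)) hzpos]

end AR1

/-- for fixed `γ > 0`, writing `w^opt(φ) = (γ Λ(φ)⁻¹ + I)⁻¹ 1`,
each entry of `w^opt` is strictly decreasing in `φ` on `(0,1)`, and as `φ → 1⁻`
each entry tends to `0`. -/
theorem stmt_14 (n : ℕ) (hn : 2 ≤ n) (γ : ℝ) (hγ : 0 < γ)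
    (w : ℝ → Fin n → ℝ)
    (hw : ∀ φ : ℝ, w φ = (γ • (ar1Lambda n φ)⁻¹ + 1)⁻¹ *ᵥ (1 : Fin n → ℝ)) :
    (∀ t : Fin n, StrictAntiOn (fun φ => w φ t) (Set.Ioo (0 : ℝ) 1)) ∧
    (∀ t : Fin n,
      Tendsto (fun φ => w φ t) (nhdsWithin 1 (Set.Iio (1 : ℝ))) (nhds 0)) := by
  set z : ℝ → Fin n → ℝ := fun φ => (ar1Lambda n φ + γ • 1)⁻¹ *ᵥ 1
  have hdom (φ : ℝ) (hφ : φ ∈ Set.Ioo 0 1) : (ar1Lambda n φ + γ • 1).IsRowDominantZMatrix :=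
    (isRowDominantZMatrix_ar1Lambda hn hφ).add_smul_one hγ.le
  have hz (φ : ℝ) (hφ : φ ∈ Set.Ioo 0 1) : (ar1Lambda n φ + γ • 1) *ᵥ z φ = 1 := by
    rw [mulVec_mulVec, mul_nonsing_inv _ (hdom φ hφ).isUnit_det, one_mulVec]
  have hwz (φ : ℝ) (hφ : φ ∈ Set.Ioo 0 1) (t : Fin n) : w φ t = 1 - γ * z φ t := by
    rw [hw, smul_inv_add_one_inv_mulVec (isRowDominantZMatrix_ar1Lambda hn hφ).isUnit_det γ
      (hdom φ hφ).isUnit_det]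
    rfl
  refine ⟨fun t φ₁ h₁ φ₂ h₂ h => ?_, fun t => ?_⟩
  · have := lt_of_ar1_mulVec_eq_one hn hγ.le h₁ h₂ h (hz φ₁ h₁) (hz φ₂ h₂) t
    simp only [hwz φ₁ h₁, hwz φ₂ h₂]
    nlinarith
  · have hIoo : Set.Ioo (0 : ℝ) 1 ∈ nhdsWithin 1 (Set.Iio 1) := Ioo_mem_nhdsLT one_pos
    refine squeeze_zero' (g := fun φ => (1 - φ) / γ) ?_ ?_ ?_
    · filter_upwards [hIoo] with φ hφ
      rw [hwz φ hφ, sub_nonneg]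
      exact mul_le_one_of_ar1_mulVec_eq_one hn hγ.le hφ (hz φ hφ) t
    · filter_upwards [hIoo] with φ hφ
      have h₁ := one_le_mul_of_ar1_mulVec_eq_one hn hγ.le hφ (hz φ hφ) t
      have h₂ := mul_le_one_of_ar1_mulVec_eq_one hn hγ.le hφ (hz φ hφ) t
      rw [hwz φ hφ, le_div_iff₀ hγ]
      nlinarith [mul_le_mul_of_nonneg_left h₂ (sub_nonneg.2 hφ.2.le)]
    · refine tendsto_nhdsWithin_of_tendsto_nhds ?_
      have : Tendsto (fun φ : ℝ => (1 - φ) / γ) (nhds 1) (nhds ((1 - 1) / γ)) :=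
        (tendsto_const_nhds.sub tendsto_id).div_const γ
      simpa using this
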